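/- arXiv:1404.1729 — 5 statements merged into one kernel-verified Lean document; each statement's English description precedes it below -/
import Mathlib

section
/- For every real k > 0 and every function v in H^1((0,π); sinθ dθ), one has ∫₀^π (|v'(θ)|² + (k²/sin²θ) v(θ)²) sinθ dθ ≥ (k² + k) ∫₀^π v(θ)² sinθ dθ, with equality if and only if v(θ) = C sin^k(θ) for some constant C. -/
/-!
Completing the square gives, on `(0, π)`,
`(v'² + k² v² / sin² θ) sin θ = (k² + k) v² sin θ + (v' - k cot θ v)² sin θ + k (v² cos θ)'`.
The boundary term `v² cos θ` has one-sided limits at `0` and `π` because its derivative is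
integrable, and these limits vanish because `v² / sin θ` is integrable while `1 / sin θ` is not
integrable near either endpoint. Equality therefore holds iff `v' = k cot θ v` almost everywhere,
i.e. iff `(v sin^(-k) θ)' = 0`.
-/

open Real MeasureTheory Set Filter Topology

theorem exists_tendsto_of_hasDerivAt_of_integrableOn_Ioo
    {E : Type*} [NormedAddCommGroup E] [NormedSpace ℝ E] [CompleteSpace E]
    {F f : ℝ → E} {a b : ℝ} (hab : a < b)
    (hF : ∀ x ∈ Ioo a b, HasDerivAt F (f x) x) (hf : IntegrableOn f (Ioo a b)) :
    (∃ La, Tendsto F (𝓝[>] a) (𝓝 La)) ∧ ∃ Lb, Tendsto F (𝓝[<] b) (𝓝 Lb) := by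
  obtain ⟨c, hc⟩ := nonempty_Ioo.2 hab
  have hfi : IntervalIntegrable f volume a b :=
    (intervalIntegrable_iff_integrableOn_Ioo_of_le hab.le).2 hf
  set G : ℝ → E := fun x => F c + ∫ t in c..x, f t
  have hG : ContinuousOn G (Icc a b) := by
    rw [← uIcc_of_le hab.le]
    exact continuousOn_const.add (intervalIntegral.continuousOn_primitive_interval' hfi
      (uIcc_of_le hab.le ▸ Ioo_subset_Icc_self hc))
  have hFG : EqOn F G (Ioo a b) := fun x hx => by
    have hsub : uIcc c x ⊆ Ioo a b := ordConnected_Ioo.uIcc_subset hc hx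
    have := intervalIntegral.integral_eq_sub_of_hasDerivAt (fun t ht => hF t (hsub ht))
      (hfi.mono_set (hsub.trans Ioo_subset_Icc_self |>.trans (uIcc_of_le hab.le).symm.subset))
    simp only [G, this, add_sub_cancel]
  have hlim : ∀ x ∈ Icc a b, Tendsto F (𝓝[Ioo a b] x) (𝓝 (G x)) := fun x hx =>
    ((hG x hx).mono Ioo_subset_Icc_self).tendsto.congr'
      (eventuallyEq_nhdsWithin_of_eqOn hFG.symm)
  exact ⟨⟨G a, by simpa [nhdsWithin_Ioo_eq_nhdsGT hab] using hlim a (left_mem_Icc.2 hab.le)⟩,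
    ⟨G b, by simpa [nhdsWithin_Ioo_eq_nhdsLT hab] using hlim b (right_mem_Icc.2 hab.le)⟩⟩

theorem eq_zero_of_tendsto_of_integrableOn_div_sin {u : ℝ → ℝ} {L : ℝ} {l : Filter ℝ}
    [NeBot l] [TendstoIxxClass Icc l l] (hl : Ioo 0 π ∈ l) (hsin : Tendsto sin l (𝓝 0))
    (hu : Tendsto u l (𝓝 L)) (hi : IntegrableOn (fun θ => u θ / sin θ) (Ioo 0 π)) :
    L = 0 := by
  by_contra hL
  have hsin_pos : ∀ᶠ θ in l, 0 < sin θ := by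
    filter_upwards [hl] with θ hθ using sin_pos_of_mem_Ioo hθ
  have hsin_ne : ∀ᶠ θ in l, sin θ ≠ 0 := hsin_pos.mono fun θ hθ => hθ.ne'
  have hu_large : ∀ᶠ θ in l, |L| / 2 ≤ |u θ| :=
    hu.abs.eventually (eventually_ge_nhds (half_lt_self (abs_pos.2 hL)))
  refine not_integrableOn_of_tendsto_norm_atTop_of_deriv_isBigO_filter l hl
    (f := fun θ => log (sin θ)) ?_ ?_ ?_ hi
  · filter_upwards [hsin_ne] with θ hθ using differentiableAt_sin.log hθ
  · exact tendsto_abs_atBot_atTop.comp (tendsto_log_nhdsGT_zero.comp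
      (tendsto_nhdsWithin_iff.2 ⟨hsin, hsin_pos⟩))
  · refine Asymptotics.IsBigO.of_bound (2 / |L|) ?_
    filter_upwards [hsin_ne, hu_large] with θ hθ hθu
    rw [(hasDerivAt_sin θ).log hθ |>.deriv, norm_div, norm_div, Real.norm_eq_abs,
      Real.norm_eq_abs, Real.norm_eq_abs, mul_div_assoc']
    gcongr
    rw [div_mul_eq_mul_div, le_div_iff₀ (abs_pos.2 hL)]
    linarith [mul_le_of_le_one_left (abs_nonneg L) (abs_cos_le_one θ)]

theorem eq_of_hasDerivAt_of_ae_eq_zero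
    {E : Type*} [NormedAddCommGroup E] [NormedSpace ℝ E] [CompleteSpace E]
    {w w' : ℝ → E} {a b : ℝ} (hw : ∀ x ∈ Ioo a b, HasDerivAt w (w' x) x)
    (h0 : ∀ᵐ x, x ∈ Ioo a b → w' x = 0) {x y : ℝ} (hx : x ∈ Ioo a b)
    (hy : y ∈ Ioo a b) :
    w x = w y := by
  have hsub : uIcc x y ⊆ Ioo a b := ordConnected_Ioo.uIcc_subset hx hy
  have hzero : w' =ᵐ[volume.restrict (uIoc x y)] 0 := by
    filter_upwards [ae_restrict_of_ae h0, ae_restrict_mem measurableSet_uIoc] with t ht htm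
    exact ht (hsub (uIoc_subset_uIcc htm))
  have := intervalIntegral.integral_eq_sub_of_hasDerivAt (fun t ht => hw t (hsub ht))
    ((intervalIntegrable_iff.2 (integrable_zero _ _ _)).congr_ae hzero.symm)
  rw [intervalIntegral.integral_congr_ae_restrict hzero] at this
  simp only [Pi.zero_apply, intervalIntegral.integral_zero] at this
  exact (sub_eq_zero.1 this.symm).symm

theorem aestronglyMeasurable_of_hasDerivAt {f f' : ℝ → ℝ} {s : Set ℝ} (hs : MeasurableSet s)
    (hf : ∀ x ∈ s, HasDerivAt f (f' x) x) : AEStronglyMeasurable f' (volume.restrict s) :=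
  (measurable_deriv f).aestronglyMeasurable.congr <| by
    filter_upwards [ae_restrict_mem hs] with x hx using (hf x hx).deriv

section

variable {k : ℝ} {v v' : ℝ → ℝ}

theorem hasDerivAt_sq_mul_cos {θ : ℝ} (hv : HasDerivAt v (v' θ) θ) :
    HasDerivAt (fun θ => v θ ^ 2 * cos θ)
      (2 * v θ * v' θ * cos θ - v θ ^ 2 * sin θ) θ := by
  refine ((hv.pow 2).mul (hasDerivAt_cos θ)).congr_deriv ?_
  simp only [Pi.pow_apply]
  push_cast
  ring

theorem integrableOn_sq_deriv_mul_sin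
    (hderiv : ∀ θ ∈ Ioo (0:ℝ) π, HasDerivAt v (v' θ) θ)
    (hint : IntegrableOn
      (fun θ => ((v' θ)^2 + (k^2 / (Real.sin θ)^2) * (v θ)^2) * Real.sin θ) (Ioo 0 π)) :
    IntegrableOn (fun θ => v' θ ^ 2 * sin θ) (Ioo 0 π) := by
  refine hint.mono' (((aestronglyMeasurable_of_hasDerivAt measurableSet_Ioo hderiv).pow 2).mul
    continuous_sin.aestronglyMeasurable) ?_
  filter_upwards [ae_restrict_mem measurableSet_Ioo] with θ hθ
  have hs := sin_pos_of_mem_Ioo hθ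
  rw [Real.norm_eq_abs, abs_of_nonneg (by positivity)]
  have : 0 ≤ k ^ 2 / sin θ ^ 2 * v θ ^ 2 * sin θ := by positivity
  linarith

theorem integrableOn_sq_div_sin (hk : k ≠ 0)
    (hderiv : ∀ θ ∈ Ioo (0:ℝ) π, HasDerivAt v (v' θ) θ)
    (hint : IntegrableOn
      (fun θ => ((v' θ)^2 + (k^2 / (Real.sin θ)^2) * (v θ)^2) * Real.sin θ) (Ioo 0 π)) :
    IntegrableOn (fun θ => v θ ^ 2 / sin θ) (Ioo 0 π) := by
  have hv : AEStronglyMeasurable v (volume.restrict (Ioo 0 π)) :=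
    (HasDerivAt.continuousOn hderiv).aestronglyMeasurable measurableSet_Ioo
  refine (hint.const_mul (k ^ 2)⁻¹).mono'
    ((hv.pow 2).div₀ continuous_sin.aestronglyMeasurable) ?_
  filter_upwards [ae_restrict_mem measurableSet_Ioo] with θ hθ
  have hs := sin_pos_of_mem_Ioo hθ
  rw [Real.norm_eq_abs, abs_of_nonneg (by positivity)]
  have : (k ^ 2)⁻¹ * ((v' θ ^ 2 + k ^ 2 / sin θ ^ 2 * v θ ^ 2) * sin θ) =
      (k ^ 2)⁻¹ * (v' θ ^ 2 * sin θ) + v θ ^ 2 / sin θ := by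
    field_simp
  rw [this]
  have : 0 ≤ (k ^ 2)⁻¹ * (v' θ ^ 2 * sin θ) := by positivity
  linarith

theorem integrableOn_sq_mul_sin (hv : IntegrableOn (fun θ => v θ ^ 2 / sin θ) (Ioo 0 π)) :
    IntegrableOn (fun θ => v θ ^ 2 * sin θ) (Ioo 0 π) := by
  refine hv.mono' ((hv.aestronglyMeasurable.mul continuous_sin.aestronglyMeasurable).mul
    continuous_sin.aestronglyMeasurable |>.congr ?_) ?_
  · filter_upwards [ae_restrict_mem measurableSet_Ioo] with θ hθ
    simp only [Pi.mul_apply]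
    field_simp [(sin_pos_of_mem_Ioo hθ).ne']
  · filter_upwards [ae_restrict_mem measurableSet_Ioo] with θ hθ
    have hs := sin_pos_of_mem_Ioo hθ
    rw [Real.norm_eq_abs, abs_of_nonneg (by positivity), le_div_iff₀ hs, mul_assoc]
    exact mul_le_of_le_one_right (sq_nonneg _) (by nlinarith [sin_le_one θ])

theorem integrableOn_deriv_sq_mul_cos
    (hderiv : ∀ θ ∈ Ioo (0:ℝ) π, HasDerivAt v (v' θ) θ)
    (hv : IntegrableOn (fun θ => v θ ^ 2 / sin θ) (Ioo 0 π))
    (hv' : IntegrableOn (fun θ => v' θ ^ 2 * sin θ) (Ioo 0 π)) :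
    IntegrableOn (fun θ => 2 * v θ * v' θ * cos θ - v θ ^ 2 * sin θ) (Ioo 0 π) := by
  have hmv : AEStronglyMeasurable v (volume.restrict (Ioo 0 π)) :=
    (HasDerivAt.continuousOn hderiv).aestronglyMeasurable measurableSet_Ioo
  have hmv' := aestronglyMeasurable_of_hasDerivAt measurableSet_Ioo hderiv
  refine ((hv.add hv').add (integrableOn_sq_mul_sin hv)).mono'
    (((aestronglyMeasurable_const.mul hmv).mul hmv').mul continuous_cos.aestronglyMeasurable
      |>.sub ((hmv.pow 2).mul continuous_sin.aestronglyMeasurable)) ?_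
  filter_upwards [ae_restrict_mem measurableSet_Ioo] with θ hθ
  have hs := sin_pos_of_mem_Ioo hθ
  have hcos : |2 * v θ * v' θ * cos θ| ≤ 2 * |v θ| * |v' θ| := by
    rw [abs_mul, abs_mul, abs_mul, abs_two]
    exact mul_le_of_le_one_right (by positivity) (abs_cos_le_one θ)
  have hamgm : 2 * |v θ| * |v' θ| ≤ v θ ^ 2 / sin θ + v' θ ^ 2 * sin θ := by
    rw [div_add' _ _ _ hs.ne', le_div_iff₀ hs]
    have := sq_nonneg (|v θ| - |v' θ| * sin θ)
    rw [sub_sq, mul_pow, sq_abs, sq_abs] at this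
    linarith
  calc ‖2 * v θ * v' θ * cos θ - v θ ^ 2 * sin θ‖
      ≤ |2 * v θ * v' θ * cos θ| + |v θ ^ 2 * sin θ| :=
        abs_sub (2 * v θ * v' θ * cos θ) (v θ ^ 2 * sin θ)
    _ ≤ _ := by
      rw [abs_of_nonneg (mul_nonneg (sq_nonneg (v θ)) hs.le)]
      simp only [Pi.add_apply]
      linarith

theorem integral_deriv_sq_mul_cos_eq_zero
    (hderiv : ∀ θ ∈ Ioo (0:ℝ) π, HasDerivAt v (v' θ) θ)
    (hv : IntegrableOn (fun θ => v θ ^ 2 / sin θ) (Ioo 0 π))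
    (hv' : IntegrableOn (fun θ => v' θ ^ 2 * sin θ) (Ioo 0 π)) :
    ∫ θ in Ioo 0 π, (2 * v θ * v' θ * cos θ - v θ ^ 2 * sin θ) = 0 := by
  have hi := integrableOn_deriv_sq_mul_cos hderiv hv hv'
  have hu : IntegrableOn (fun θ => v θ ^ 2 * cos θ / sin θ) (Ioo 0 π) :=
    IntegrableOn.congr_fun
      (hv.bdd_mul continuous_cos.aestronglyMeasurable (ae_of_all _ abs_cos_le_one))
      (fun θ _ => by ring) measurableSet_Ioo
  have hderiv' := fun θ hθ => hasDerivAt_sq_mul_cos (hderiv θ hθ)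
  obtain ⟨⟨La, hLa⟩, ⟨Lb, hLb⟩⟩ :=
    exists_tendsto_of_hasDerivAt_of_integrableOn_Ioo pi_pos hderiv' hi
  have hLa0 : La = 0 := eq_zero_of_tendsto_of_integrableOn_div_sin (Ioo_mem_nhdsGT pi_pos)
    ((continuous_sin.tendsto' 0 0 sin_zero).mono_left nhdsWithin_le_nhds) hLa hu
  have hLb0 : Lb = 0 := eq_zero_of_tendsto_of_integrableOn_div_sin (Ioo_mem_nhdsLT pi_pos)
    ((continuous_sin.tendsto' π 0 sin_pi).mono_left nhdsWithin_le_nhds) hLb hu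
  rw [← integral_Ioc_eq_integral_Ioo, ← intervalIntegral.integral_of_le pi_pos.le,
    intervalIntegral.integral_eq_sub_of_hasDerivAt_of_tendsto pi_pos hderiv'
      ((intervalIntegrable_iff_integrableOn_Ioo_of_le pi_pos.le).2 hi) hLa hLb, hLa0, hLb0,
    sub_zero]

theorem energy_density_eq {θ : ℝ} (k a b : ℝ) (hs : sin θ ≠ 0) :
    (b ^ 2 + k ^ 2 / sin θ ^ 2 * a ^ 2) * sin θ = (k ^ 2 + k) * (a ^ 2 * sin θ) +
      (b - k * cot θ * a) ^ 2 * sin θ + k * (2 * a * b * cos θ - a ^ 2 * sin θ) := by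
  rw [cot_eq_cos_div_sin]
  field_simp
  linear_combination (-k ^ 2 * a ^ 2) * sin_sq_add_cos_sq θ

theorem integrableOn_sq_sub_cot_mul_sin (hk : k ≠ 0)
    (hderiv : ∀ θ ∈ Ioo (0:ℝ) π, HasDerivAt v (v' θ) θ)
    (hint : IntegrableOn
      (fun θ => ((v' θ)^2 + (k^2 / (Real.sin θ)^2) * (v θ)^2) * Real.sin θ) (Ioo 0 π)) :
    IntegrableOn (fun θ => (v' θ - k * cot θ * v θ) ^ 2 * sin θ) (Ioo 0 π) := by
  have hv := integrableOn_sq_div_sin hk hderiv hint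
  have hvs := (integrableOn_sq_mul_sin hv).const_mul (k ^ 2 + k)
  have hb := (integrableOn_deriv_sq_mul_cos hderiv hv
    (integrableOn_sq_deriv_mul_sin hderiv hint)).const_mul k
  refine ((hint.sub hvs).sub hb).congr_fun (fun θ hθ => ?_) measurableSet_Ioo
  simp only [Pi.sub_apply, energy_density_eq k (v θ) (v' θ) (sin_pos_of_mem_Ioo hθ).ne']
  ring

theorem integral_energy_eq (hk : k ≠ 0)
    (hderiv : ∀ θ ∈ Ioo (0:ℝ) π, HasDerivAt v (v' θ) θ)
    (hint : IntegrableOn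
      (fun θ => ((v' θ)^2 + (k^2 / (Real.sin θ)^2) * (v θ)^2) * Real.sin θ) (Ioo 0 π)) :
    ∫ θ in Ioo 0 π, ((v' θ)^2 + (k^2 / (Real.sin θ)^2) * (v θ)^2) * Real.sin θ =
      (k ^ 2 + k) * (∫ θ in Ioo 0 π, v θ ^ 2 * sin θ) +
        ∫ θ in Ioo 0 π, (v' θ - k * cot θ * v θ) ^ 2 * sin θ := by
  have hv := integrableOn_sq_div_sin hk hderiv hint
  have hv' := integrableOn_sq_deriv_mul_sin hderiv hint
  have hvs := (integrableOn_sq_mul_sin hv).const_mul (k ^ 2 + k)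
  have hG := integrableOn_sq_sub_cot_mul_sin hk hderiv hint
  have hsum := integral_add (hvs.add hG) ((integrableOn_deriv_sq_mul_cos hderiv hv hv').const_mul k)
  simp only [Pi.add_apply] at hsum
  rw [setIntegral_congr_fun measurableSet_Ioo fun θ hθ =>
      energy_density_eq k (v θ) (v' θ) (sin_pos_of_mem_Ioo hθ).ne',
    hsum, integral_add hvs hG, integral_const_mul, integral_const_mul,
    integral_deriv_sq_mul_cos_eq_zero hderiv hv hv', mul_zero, add_zero]

theorem ae_eq_cot_mul_iff_eq_mul_sin_rpow
    (hderiv : ∀ θ ∈ Ioo (0:ℝ) π, HasDerivAt v (v' θ) θ) :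
    (∀ᵐ θ, θ ∈ Ioo 0 π → v' θ = k * cot θ * v θ) ↔
      ∃ C : ℝ, ∀ θ ∈ Ioo 0 π, v θ = C * sin θ ^ k := by
  have hsin_rpow : ∀ θ ∈ Ioo 0 π, ∀ r : ℝ,
      HasDerivAt (fun x => sin x ^ r) (r * cot θ * sin θ ^ r) θ := fun θ hθ r => by
    have hs := sin_pos_of_mem_Ioo hθ
    refine ((hasDerivAt_sin θ).rpow_const (Or.inl hs.ne')).congr_deriv ?_
    rw [rpow_sub_one hs.ne', cot_eq_cos_div_sin]
    ring
  constructor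
  · intro h
    have hw : ∀ θ ∈ Ioo 0 π, HasDerivAt (fun x => v x * sin x ^ (-k))
        ((v' θ - k * cot θ * v θ) * sin θ ^ (-k)) θ := fun θ hθ =>
      ((hderiv θ hθ).mul (hsin_rpow θ hθ (-k))).congr_deriv (by ring)
    have hmid : π / 2 ∈ Ioo 0 π := ⟨by positivity, by linarith [pi_pos]⟩
    refine ⟨v (π / 2) * sin (π / 2) ^ (-k), fun θ hθ => ?_⟩
    rw [← eq_of_hasDerivAt_of_ae_eq_zero hw
      (h.mono fun θ hθ hmem => by rw [hθ hmem, sub_self, zero_mul]) hθ hmid, mul_assoc,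
      ← rpow_add (sin_pos_of_mem_Ioo hθ), neg_add_cancel, rpow_zero, mul_one]
  · rintro ⟨C, hC⟩
    refine ae_of_all _ fun θ hθ => ?_
    have hev : v =ᶠ[𝓝 θ] fun x => C * sin x ^ k :=
      eventually_of_mem (isOpen_Ioo.mem_nhds hθ) hC
    rw [(hderiv θ hθ).unique (((hsin_rpow θ hθ k).const_mul C).congr_of_eventuallyEq hev),
      hC θ hθ]
    ring

end

theorem stmt0_general (k : ℝ) (hk : 0 < k) (v v' : ℝ → ℝ)
    (hderiv : ∀ θ ∈ Ioo (0:ℝ) π, HasDerivAt v (v' θ) θ)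
    (hint : IntegrableOn
      (fun θ => ((v' θ)^2 + (k^2 / (Real.sin θ)^2) * (v θ)^2) * Real.sin θ) (Ioo 0 π)) :
    (k^2 + k) * ∫ θ in Ioo (0:ℝ) π, (v θ)^2 * Real.sin θ ≤
      (∫ θ in Ioo (0:ℝ) π, ((v' θ)^2 + (k^2 / (Real.sin θ)^2) * (v θ)^2) * Real.sin θ) ∧
    ((k^2 + k) * ∫ θ in Ioo (0:ℝ) π, (v θ)^2 * Real.sin θ =
      (∫ θ in Ioo (0:ℝ) π, ((v' θ)^2 + (k^2 / (Real.sin θ)^2) * (v θ)^2) * Real.sin θ) ↔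
      ∃ C : ℝ, ∀ θ ∈ Ioo (0:ℝ) π, v θ = C * (Real.sin θ) ^ k) := by
  have hG_nonneg : 0 ≤ᵐ[volume.restrict (Ioo 0 π)]
      fun θ => (v' θ - k * cot θ * v θ) ^ 2 * sin θ := by
    filter_upwards [ae_restrict_mem measurableSet_Ioo] with θ hθ
    exact mul_nonneg (sq_nonneg _) (sin_pos_of_mem_Ioo hθ).le
  rw [integral_energy_eq hk.ne' hderiv hint, ← ae_eq_cot_mul_iff_eq_mul_sin_rpow hderiv]
  refine ⟨le_add_of_nonneg_right (integral_nonneg_of_ae hG_nonneg), ?_⟩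
  rw [left_eq_add, integral_eq_zero_iff_of_nonneg_ae hG_nonneg
    (integrableOn_sq_sub_cot_mul_sin hk.ne' hderiv hint),
    EventuallyEq, ae_restrict_iff' measurableSet_Ioo]
  refine eventually_congr (ae_of_all _ fun θ => forall_congr' fun hθ => ?_)
  rw [Pi.zero_apply, mul_eq_zero, or_iff_left (sin_pos_of_mem_Ioo hθ).ne', sq_eq_zero_iff,
    sub_eq_zero]

theorem stmt0 (k : ℝ) (hk : 0 < k) (v v' : ℝ → ℝ)
    (hderiv : ∀ θ ∈ Ioo (0:ℝ) π, HasDerivAt v (v' θ) θ)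
    (hH1 : IntegrableOn (fun θ => ((v θ)^2 + (v' θ)^2) * Real.sin θ) (Ioo 0 π))
    (hint : IntegrableOn
      (fun θ => ((v' θ)^2 + (k^2 / (Real.sin θ)^2) * (v θ)^2) * Real.sin θ) (Ioo 0 π)) :
    (k^2 + k) * ∫ θ in Ioo (0:ℝ) π, (v θ)^2 * Real.sin θ ≤
      (∫ θ in Ioo (0:ℝ) π, ((v' θ)^2 + (k^2 / (Real.sin θ)^2) * (v θ)^2) * Real.sin θ) ∧
    ((k^2 + k) * ∫ θ in Ioo (0:ℝ) π, (v θ)^2 * Real.sin θ =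
      (∫ θ in Ioo (0:ℝ) π, ((v' θ)^2 + (k^2 / (Real.sin θ)^2) * (v θ)^2) * Real.sin θ) ↔
      ∃ C : ℝ, ∀ θ ∈ Ioo (0:ℝ) π, v θ = C * (Real.sin θ) ^ k) :=
  stmt0_general k hk v v' hderiv hint
end

section
/- With n, m, p and E₀,…,E₄ as defined, the φ-derivatives satisfy: ∂_φE₀ = −sinθ E₁, ∂_φE₁ = 3 sinθ E₀ + cosθ E₂ + sinθ E₄, ∂_φE₂ = −cosθ E₁ − sinθ E₃, ∂_φE₃ = sinθ E₂ + 2cosθ E₄, ∂_φE₄ = −sinθ E₁ − 2cosθ E₃. -/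
/-!
Differentiating in `φ` moves the orthonormal frame by `∂_φ n = -sin θ p`, `∂_φ m = -cos θ p` and
`∂_φ p = sin θ n + cos θ m`. By the product rule each `∂_φ Eₖ` is then a combination of outer
products of frame vectors. The only other input is the completeness relation
`n ⊗ n + m ⊗ m + p ⊗ p = Id`, needed to match the identity term that `E₀` brings into `∂_φ E₁`.
-/

open Real Matrix

noncomputable def nVec (θ φ : ℝ) : Fin 3 → ℝ := ![sin θ * cos φ, sin θ * sin φ, cos θ]
noncomputable def mVec (θ φ : ℝ) : Fin 3 → ℝ := ![cos θ * cos φ, cos θ * sin φ, -sin θ]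
noncomputable def pVec (θ φ : ℝ) : Fin 3 → ℝ := ![sin φ, -cos φ, 0]

noncomputable def E0 (θ φ : ℝ) : Matrix (Fin 3) (Fin 3) ℝ :=
  vecMulVec (nVec θ φ) (nVec θ φ) - (1/3 : ℝ) • (1 : Matrix (Fin 3) (Fin 3) ℝ)
noncomputable def E1 (θ φ : ℝ) : Matrix (Fin 3) (Fin 3) ℝ :=
  vecMulVec (nVec θ φ) (pVec θ φ) + vecMulVec (pVec θ φ) (nVec θ φ)
noncomputable def E2 (θ φ : ℝ) : Matrix (Fin 3) (Fin 3) ℝ :=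
  vecMulVec (nVec θ φ) (mVec θ φ) + vecMulVec (mVec θ φ) (nVec θ φ)
noncomputable def E3 (θ φ : ℝ) : Matrix (Fin 3) (Fin 3) ℝ :=
  vecMulVec (mVec θ φ) (pVec θ φ) + vecMulVec (pVec θ φ) (mVec θ φ)
noncomputable def E4 (θ φ : ℝ) : Matrix (Fin 3) (Fin 3) ℝ :=
  vecMulVec (mVec θ φ) (mVec θ φ) - vecMulVec (pVec θ φ) (pVec θ φ)

section MatrixDeriv

variable {𝕜 : Type*} [NontriviallyNormedField 𝕜] {m n : Type*} [Fintype n]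

theorem HasDerivAt.matrix_apply {F : 𝕜 → Matrix m n 𝕜} {F' : Matrix m n 𝕜} {x : 𝕜}
    (h : HasDerivAt F F' x) (i : m) (j : n) : HasDerivAt (fun s => F s i j) (F' i j) x :=
  hasDerivAt_pi.1 (hasDerivAt_pi.1 h i) j

theorem HasDerivAt.vecMulVec {u : 𝕜 → m → 𝕜} {v : 𝕜 → n → 𝕜} {u' : m → 𝕜} {v' : n → 𝕜} {x : 𝕜}
    (hu : HasDerivAt u u' x) (hv : HasDerivAt v v' x) :
    HasDerivAt (fun s => Matrix.vecMulVec (u s) (v s))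
      (Matrix.vecMulVec u' (v x) + Matrix.vecMulVec (u x) v') x := by
  refine hasDerivAt_pi.2 fun i => hasDerivAt_pi.2 fun j => ?_
  simp only [vecMulVec_apply, Matrix.add_apply]
  exact (hasDerivAt_pi.1 hu i).mul (hasDerivAt_pi.1 hv j)

end MatrixDeriv

-- `HasDerivAt.add` and friends need a normed space; the entrywise sup norm induces the product
-- topology, so these derivatives agree with the entrywise ones.
attribute [local instance] Matrix.normedAddCommGroup Matrix.normedSpace

section Frame

variable (θ φ : ℝ)

theorem hasDerivAt_nVec : HasDerivAt (nVec θ) (-sin θ • pVec θ φ) φ := by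
  refine hasDerivAt_pi.2 fun i => ?_
  fin_cases i <;> simp only [nVec, pVec]
  · simpa using (hasDerivAt_cos φ).const_mul (sin θ)
  · simpa using (hasDerivAt_sin φ).const_mul (sin θ)
  · simpa using hasDerivAt_const φ (cos θ)

theorem hasDerivAt_mVec : HasDerivAt (mVec θ) (-cos θ • pVec θ φ) φ := by
  refine hasDerivAt_pi.2 fun i => ?_
  fin_cases i <;> simp only [mVec, pVec]
  · simpa using (hasDerivAt_cos φ).const_mul (cos θ)
  · simpa using (hasDerivAt_sin φ).const_mul (cos θ)
  · simpa using hasDerivAt_const φ (-sin θ)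

theorem hasDerivAt_pVec : HasDerivAt (pVec θ) (sin θ • nVec θ φ + cos θ • mVec θ φ) φ := by
  refine hasDerivAt_pi.2 fun i => ?_
  fin_cases i <;> simp only [nVec, mVec, pVec, Pi.add_apply, Pi.smul_apply, smul_eq_mul,
    Fin.zero_eta, Fin.mk_one, Fin.reduceFinMk, cons_val]
  · exact (hasDerivAt_sin φ).congr_deriv (by linear_combination -cos φ * sin_sq_add_cos_sq θ)
  · exact (hasDerivAt_cos φ).neg.congr_deriv (by linear_combination -sin φ * sin_sq_add_cos_sq θ)
  · exact (hasDerivAt_const φ (0 : ℝ)).congr_deriv (by ring)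

theorem vecMulVec_frame_sum_eq_one :
    vecMulVec (nVec θ φ) (nVec θ φ) + vecMulVec (mVec θ φ) (mVec θ φ) +
      vecMulVec (pVec θ φ) (pVec θ φ) = 1 := by
  have hθ := sin_sq_add_cos_sq θ
  have hφ := sin_sq_add_cos_sq φ
  ext i j
  fin_cases i <;> fin_cases j <;>
    simp only [nVec, mVec, pVec, Matrix.add_apply, vecMulVec_apply, one_apply, Fin.zero_eta,
      Fin.mk_one, Fin.reduceFinMk, cons_val] <;>
    grind

theorem hasDerivAt_E0 : HasDerivAt (E0 θ) (-sin θ • E1 θ φ) φ := by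
  refine (((hasDerivAt_nVec θ φ).vecMulVec (hasDerivAt_nVec θ φ)).sub_const _).congr_deriv ?_
  simp only [E1, vecMulVec_smul, smul_vecMulVec]
  module

theorem hasDerivAt_E1 :
    HasDerivAt (E1 θ) ((3 * sin θ) • E0 θ φ + cos θ • E2 θ φ + sin θ • E4 θ φ) φ := by
  refine (((hasDerivAt_nVec θ φ).vecMulVec (hasDerivAt_pVec θ φ)).add
    ((hasDerivAt_pVec θ φ).vecMulVec (hasDerivAt_nVec θ φ))).congr_deriv ?_
  simp only [E0, E2, E4, ← vecMulVec_frame_sum_eq_one θ φ, vecMulVec_add, add_vecMulVec,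
    vecMulVec_smul, smul_vecMulVec]
  module

theorem hasDerivAt_E2 : HasDerivAt (E2 θ) (-cos θ • E1 θ φ - sin θ • E3 θ φ) φ := by
  refine (((hasDerivAt_nVec θ φ).vecMulVec (hasDerivAt_mVec θ φ)).add
    ((hasDerivAt_mVec θ φ).vecMulVec (hasDerivAt_nVec θ φ))).congr_deriv ?_
  simp only [E1, E3, vecMulVec_smul, smul_vecMulVec]
  module

theorem hasDerivAt_E3 : HasDerivAt (E3 θ) (sin θ • E2 θ φ + (2 * cos θ) • E4 θ φ) φ := by
  refine (((hasDerivAt_mVec θ φ).vecMulVec (hasDerivAt_pVec θ φ)).add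
    ((hasDerivAt_pVec θ φ).vecMulVec (hasDerivAt_mVec θ φ))).congr_deriv ?_
  simp only [E2, E4, vecMulVec_add, add_vecMulVec, vecMulVec_smul, smul_vecMulVec]
  module

theorem hasDerivAt_E4 : HasDerivAt (E4 θ) (-sin θ • E1 θ φ - (2 * cos θ) • E3 θ φ) φ := by
  refine (((hasDerivAt_mVec θ φ).vecMulVec (hasDerivAt_mVec θ φ)).sub
    ((hasDerivAt_pVec θ φ).vecMulVec (hasDerivAt_pVec θ φ))).congr_deriv ?_
  simp only [E1, E3, vecMulVec_add, add_vecMulVec, vecMulVec_smul, smul_vecMulVec]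
  module

end Frame

theorem stmt4 (θ φ : ℝ) (i j : Fin 3) :
    HasDerivAt (fun s => E0 θ s i j) ((-sin θ • E1 θ φ) i j) φ ∧
    HasDerivAt (fun s => E1 θ s i j)
      (((3 * sin θ) • E0 θ φ + cos θ • E2 θ φ + sin θ • E4 θ φ) i j) φ ∧
    HasDerivAt (fun s => E2 θ s i j) ((-cos θ • E1 θ φ - sin θ • E3 θ φ) i j) φ ∧
    HasDerivAt (fun s => E3 θ s i j) ((sin θ • E2 θ φ + (2 * cos θ) • E4 θ φ) i j) φ ∧
    HasDerivAt (fun s => E4 θ s i j) ((-sin θ • E1 θ φ - (2 * cos θ) • E3 θ φ) i j) φ :=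
  ⟨(hasDerivAt_E0 θ φ).matrix_apply i j, (hasDerivAt_E1 θ φ).matrix_apply i j,
    (hasDerivAt_E2 θ φ).matrix_apply i j, (hasDerivAt_E3 θ φ).matrix_apply i j,
    (hasDerivAt_E4 θ φ).matrix_apply i j⟩
end

section
/- For every integer k ≥ 3 and all real numbers μ₀,…,μ₄, ν₀,…,ν₄ and θ ∈ (0,π), the quantity (2k−1)[(1/3)(μ₀² + ν₀²) + Σ_{i=1}^4 (μᵢ² + νᵢ²)] + 4[sinθ(ν₀μ₁ − μ₀ν₁) + cosθ(−ν₁μ₂ + μ₁ν₂) + sinθ(−ν₁μ₄ + μ₁ν₄) + sinθ(ν₂μ₃ − μ₂ν₃) + 2cosθ(−ν₃μ₄ + μ₃ν₄)] is nonnegative. -/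
open Real

theorem stmt6 (k : ℕ) (hk : 3 ≤ k)
    (μ0 μ1 μ2 μ3 μ4 ν0 ν1 ν2 ν3 ν4 θ : ℝ) (hθ : θ ∈ Set.Ioo 0 π) :
    0 ≤ (2 * (k : ℝ) - 1) *
        ((1/3) * (μ0^2 + ν0^2) + (μ1^2 + ν1^2) + (μ2^2 + ν2^2) + (μ3^2 + ν3^2) + (μ4^2 + ν4^2))
      + 4 * (sin θ * (ν0 * μ1 - μ0 * ν1) + cos θ * (-ν1 * μ2 + μ1 * ν2)
          + sin θ * (-ν1 * μ4 + μ1 * ν4) + sin θ * (ν2 * μ3 - μ2 * ν3)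
          + 2 * cos θ * (-ν3 * μ4 + μ3 * ν4)) := by
  set s := sin θ
  set t := cos θ
  have h : s ^ 2 + t ^ 2 = 1 := sin_sq_add_cos_sq θ
  have hk' : (3 : ℝ) ≤ (k : ℝ) := by exact_mod_cast hk
  have hc : (0 : ℝ) ≤ 2 * (k : ℝ) - 1 - 5 := by linarith
  have hS : (0 : ℝ) ≤ (1/3) * (μ0^2 + ν0^2) + (μ1^2 + ν1^2) + (μ2^2 + ν2^2)
      + (μ3^2 + ν3^2) + (μ4^2 + ν4^2) := by positivity
  nlinarith [mul_nonneg hc hS,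
    sq_nonneg (5*ν0 + 6*s*μ1), sq_nonneg (5*μ0 - 6*s*ν1),
    sq_nonneg (9*μ1 + 10*t*ν2), sq_nonneg (9*ν1 - 10*t*μ2),
    sq_nonneg (2*μ1 + 5*s*ν4), sq_nonneg (2*ν1 - 5*s*μ4),
    sq_nonneg (μ3 + 2*s*ν2), sq_nonneg (ν3 - 2*s*μ2),
    sq_nonneg (2*μ3 + 2*t*ν4), sq_nonneg (2*ν3 - 2*t*μ4),
    sq_nonneg (t*μ1), sq_nonneg (t*ν1), sq_nonneg (t*μ2), sq_nonneg (t*ν2),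
    sq_nonneg (t*μ4), sq_nonneg (t*ν4), sq_nonneg μ2, sq_nonneg ν2, h]
end

section
/- For every real w with 0 < w ≤ 2 and δ₀ = 1/1000, setting α₁(w) = −44/9 + 24/w + 8w, β₁(w) = 4w + 2, γ₁(w) = −43 + 119.99/w + 6(2−w)(2w+3), the quadratic form α₁(w)x² + β₁(w)y² + γ₁(w)z² − 24xy + 16yz − δ₀(x² + y² + z²) is nonnegative for all real x, y, z. -/
theorem stmt16 (w : ℝ) (hw0 : 0 < w) (hw2 : w ≤ 2) (x y z : ℝ) :
    0 ≤ (-44/9 + 24 / w + 8 * w) * x^2 + (4 * w + 2) * y^2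
        + (-43 + 119.99 / w + 6 * (2 - w) * (2 * w + 3)) * z^2
        - 24 * x * y + 16 * y * z - (1/1000) * (x^2 + y^2 + z^2) := by
  set A : ℝ := 8*w^2 - (44009/9000)*w + 24 with hAdef
  set B : ℝ := 4*w + 1999/1000 with hBdef
  set E : ℝ := A*B - 144*w with hEdef
  set C : ℝ := -12*w^3 + 6*w^2 - (7001/1000)*w + 11999/100 with hCdef
  have hA : 0 < A := by rw [hAdef]; nlinarith [sq_nonneg w, sq_nonneg (w-1)]
  have hE : 0 < E := by
    rw [hEdef, hAdef, hBdef]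
    nlinarith [sq_nonneg w, sq_nonneg (w-1), sq_nonneg (w-2), mul_pos hw0 hw0,
      mul_nonneg (mul_nonneg hw0.le hw0.le) hw0.le]
  have hP : 0 ≤ E*C - 64*A*w := by
    rw [hEdef, hAdef, hBdef, hCdef]
    nlinarith [sq_nonneg (w-1), sq_nonneg (w*(w-1)), sq_nonneg (w^2-1), sq_nonneg (w^3-1),
      mul_nonneg (sub_nonneg.mpr hw2) hw0.le,
      mul_nonneg (mul_nonneg (sub_nonneg.mpr hw2) hw0.le) hw0.le,
      mul_nonneg (mul_nonneg (mul_nonneg (sub_nonneg.mpr hw2) hw0.le) hw0.le) hw0.le,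
      mul_nonneg (mul_nonneg (mul_nonneg (mul_nonneg (sub_nonneg.mpr hw2) hw0.le) hw0.le) hw0.le) hw0.le,
      mul_nonneg (mul_nonneg (mul_nonneg (mul_nonneg (mul_nonneg (sub_nonneg.mpr hw2) hw0.le) hw0.le) hw0.le) hw0.le) hw0.le,
      mul_nonneg (sq_nonneg (w-1)) (sub_nonneg.mpr hw2),
      mul_nonneg (mul_nonneg (sq_nonneg (w-1)) (sub_nonneg.mpr hw2)) hw0.le,
      mul_nonneg (mul_nonneg (mul_nonneg (sq_nonneg (w-1)) (sub_nonneg.mpr hw2)) hw0.le) hw0.le,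
      mul_nonneg (mul_nonneg (mul_nonneg (mul_nonneg (sq_nonneg (w-1)) (sub_nonneg.mpr hw2)) hw0.le) hw0.le) hw0.le,
      mul_nonneg (sq_nonneg (w*(w-1))) (sub_nonneg.mpr hw2),
      mul_nonneg (mul_nonneg (sq_nonneg (w-1)) (sub_nonneg.mpr hw2)) (sub_nonneg.mpr hw2)]
  set R : ℝ := A*x^2 + B*w*y^2 + C*z^2 - 24*w*x*y + 16*w*y*z with hRdef
  have key : 0 ≤ A*E*R := by
    have id : A*E*R = E*(A*x-12*w*y)^2 + w*(E*y+8*A*z)^2 + (E*C-64*A*w)*(A*z^2) := by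
      rw [hRdef, hEdef]; ring
    rw [id]
    have := mul_nonneg hP (mul_nonneg hA.le (sq_nonneg z))
    positivity
  have hR : 0 ≤ R := by
    by_contra h
    push_neg at h
    nlinarith [mul_pos (mul_pos hA hE) (neg_pos.mpr h)]
  have hQ : (-44/9 + 24 / w + 8 * w) * x^2 + (4 * w + 2) * y^2
        + (-43 + 119.99 / w + 6 * (2 - w) * (2 * w + 3)) * z^2
        - 24 * x * y + 16 * y * z - (1/1000) * (x^2 + y^2 + z^2) = R / w := by
    rw [hRdef, hAdef, hBdef, hCdef]
    field_simp
    ring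
  rw [hQ]
  exact div_nonneg hR hw0.le
end

section
/- For R > 0 and 0 < ε < 1 − 1/(2√2), there exists a Lipschitz function ψ with compact support in (R,∞) such that ∫_R^∞ (|ψ'(r)|² − 2(1−ε)²ψ(r)²/r²) r² dr < 0. Concretely, for n sufficiently large the function ψ(r) = 1/R − 1/r on (R, 2nR/(n+1)), ψ(r) = 1/r − 1/(nR) on (2nR/(n+1), nR), and ψ = 0 elsewhere, satisfies this strict inequality. -/
/-!
Put `u = log r` and `ψ(r) = r^{-1/2} w(u)`. Then `(ψ'² - c ψ²/r²) r² dr = ((w' - w/2)² - c w²) du`,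
and since `∫ w w' = 0` the Hardy form becomes `∫ w'² - (c - 1/4) ∫ w²`. Because
`c = 2(1-ε)² > 1/4`, it remains to make `∫ w'²` small compared with `∫ w²`: dilating a fixed bump
by a factor `L` multiplies the first integral by `1/L` and the second by `L`.
-/

open Real MeasureTheory Set Topology

noncomputable def emdenFowler (w : ℝ → ℝ) (r : ℝ) : ℝ :=
  if 0 < r then w (log r) / √r else 0

section EmdenFowler

variable {w : ℝ → ℝ} {r : ℝ}

theorem emdenFowler_eventuallyEq (hr : 0 < r) :
    emdenFowler w =ᶠ[𝓝 r] fun s => w (log s) / √s := by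
  filter_upwards [Ioi_mem_nhds hr] with s hs
  exact if_pos hs

theorem support_emdenFowler_subset : Function.support (emdenFowler w) ⊆ exp '' tsupport w := by
  intro r hr
  have hr0 : 0 < r := by
    by_contra h
    exact hr (if_neg h)
  refine ⟨log r, subset_tsupport w fun h => hr ?_, exp_log hr0⟩
  simp [emdenFowler, hr0, h]

theorem tsupport_emdenFowler_subset (hw : HasCompactSupport w) :
    tsupport (emdenFowler w) ⊆ exp '' tsupport w :=
  closure_minimal support_emdenFowler_subset (hw.isCompact.image continuous_exp).isClosed

theorem hasCompactSupport_emdenFowler (hw : HasCompactSupport w) :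
    HasCompactSupport (emdenFowler w) :=
  (hw.isCompact.image continuous_exp).of_isClosed_subset (isClosed_tsupport _)
    (tsupport_emdenFowler_subset hw)

theorem contDiff_emdenFowler (hw : ContDiff ℝ 1 w) (hw' : HasCompactSupport w) :
    ContDiff ℝ 1 (emdenFowler w) := by
  refine contDiff_iff_contDiffAt.2 fun r => ?_
  by_cases hr : 0 < r
  · refine ContDiffAt.congr_of_eventuallyEq ?_ (emdenFowler_eventuallyEq hr)
    exact (hw.contDiffAt.comp r (contDiffAt_log.2 hr.ne')).div (contDiffAt_sqrt hr.ne')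
      (sqrt_pos.2 hr).ne'
  · have hr' : r ∉ tsupport (emdenFowler w) := fun h => by
      obtain ⟨u, -, rfl⟩ := tsupport_emdenFowler_subset hw' h
      exact hr (exp_pos u)
    exact contDiffAt_const.congr_of_eventuallyEq (notMem_tsupport_iff_eventuallyEq.1 hr')

theorem hasDerivAt_emdenFowler (hw : Differentiable ℝ w) (hr : 0 < r) :
    HasDerivAt (emdenFowler w) ((deriv w (log r) - w (log r) / 2) / (r * √r)) r := by
  have hsqrt : 0 < √r := sqrt_pos.2 hr
  have h := ((hw _).hasDerivAt.comp r (hasDerivAt_log hr.ne')).div (hasDerivAt_sqrt hr.ne')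
    hsqrt.ne'
  refine (h.congr_deriv ?_).congr_of_eventuallyEq (emdenFowler_eventuallyEq hr)
  simp only [Function.comp_apply]
  field_simp
  rw [sq_sqrt hr.le]
  ring

theorem hardy_integrand_emdenFowler (hw : Differentiable ℝ w) (c : ℝ) (hr : 0 < r) :
    ((deriv (emdenFowler w) r) ^ 2 - c * (emdenFowler w r) ^ 2 / r ^ 2) * r ^ 2
      = r⁻¹ * ((deriv w (log r) - w (log r) / 2) ^ 2 - c * w (log r) ^ 2) := by
  rw [(hasDerivAt_emdenFowler hw hr).deriv, emdenFowler, if_pos hr]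
  have hsqrt : 0 < √r := sqrt_pos.2 hr
  field_simp
  rw [sq_sqrt hr.le]

theorem integral_mul_deriv_self_eq_zero (hw : ContDiff ℝ 1 w) (hw' : HasCompactSupport w) :
    ∫ u, w u * deriv w u = 0 := by
  have hw1 : Differentiable ℝ w := hw.differentiable one_ne_zero
  have hsq : HasCompactSupport fun u => w u ^ 2 / 2 :=
    hw'.comp_left (g := fun x => x ^ 2 / 2) (by simp)
  refine integral_eq_zero_of_hasDerivAt_of_integrable (f := fun u => w u ^ 2 / 2)
    (fun u => ((hw1 u).hasDerivAt.pow 2).div_const 2 |>.congr_deriv (by ring)) ?_ ?_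
  · have hcont : Continuous (deriv w) := hw.continuous_deriv le_rfl
    exact Continuous.integrable_of_hasCompactSupport (by fun_prop) hw'.mul_right
  · exact Continuous.integrable_of_hasCompactSupport (by fun_prop) hsq

theorem integral_hardy_form_emdenFowler (hw : ContDiff ℝ 1 w) (hw' : HasCompactSupport w)
    (c : ℝ) {R : ℝ} (hR : 0 < R) (hwR : tsupport w ⊆ Ioi (log R)) :
    ∫ r in Ioi R, ((deriv (emdenFowler w) r) ^ 2 - c * (emdenFowler w r) ^ 2 / r ^ 2) * r ^ 2
      = (∫ u, deriv w u ^ 2) - (c - 1 / 4) * ∫ u, w u ^ 2 := by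
  have hw1 : Differentiable ℝ w := hw.differentiable one_ne_zero
  have hcont : Continuous (deriv w) := hw.continuous_deriv le_rfl
  have hw0 : Continuous w := hw.continuous
  have hderiv_supp : HasCompactSupport (deriv w) := hw'.deriv
  have hint_deriv : Integrable fun u => deriv w u ^ 2 :=
    Continuous.integrable_of_hasCompactSupport (by fun_prop)
      (hderiv_supp.comp_left (g := fun x : ℝ => x ^ 2) (by simp))
  have hint_sq : Integrable fun u => w u ^ 2 :=
    Continuous.integrable_of_hasCompactSupport (by fun_prop)
      (hw'.comp_left (g := fun x : ℝ => x ^ 2) (by simp))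
  have hint_mul : Integrable fun u => w u * deriv w u :=
    Continuous.integrable_of_hasCompactSupport (by fun_prop) hw'.mul_right
  calc _ = ∫ r in Ioi R, r⁻¹ • ((deriv w (log r) - w (log r) / 2) ^ 2 - c * w (log r) ^ 2) :=
        setIntegral_congr_fun measurableSet_Ioi fun r hr => by
          rw [smul_eq_mul]
          exact hardy_integrand_emdenFowler hw1 c (hR.trans hr)
    _ = ∫ u in Ioi (log R), (deriv w u - w u / 2) ^ 2 - c * w u ^ 2 :=
        integral_comp_log_Ioi (fun u => (deriv w u - w u / 2) ^ 2 - c * w u ^ 2) hR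
    _ = ∫ u, (deriv w u - w u / 2) ^ 2 - c * w u ^ 2 := by
        refine setIntegral_eq_integral_of_forall_compl_eq_zero fun u hu => ?_
        have hu' : u ∉ tsupport w := fun h => hu (hwR h)
        rw [image_eq_zero_of_notMem_tsupport hu',
          image_eq_zero_of_notMem_tsupport fun h => hu' (tsupport_deriv_subset h)]
        ring
    _ = ∫ u, (deriv w u ^ 2 - (c - 1 / 4) * w u ^ 2) - w u * deriv w u := by
        congr with u
        ring
    _ = _ := by
        have hint_form : Integrable fun u => deriv w u ^ 2 - (c - 1 / 4) * w u ^ 2 :=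
          hint_deriv.sub (hint_sq.const_mul _)
        rw [integral_sub hint_form hint_mul, integral_mul_deriv_self_eq_zero hw hw',
          integral_sub hint_deriv (hint_sq.const_mul _), integral_const_mul, sub_zero]

end EmdenFowler

theorem integral_comp_sub_div {F : Type*} [NormedAddCommGroup F] [NormedSpace ℝ F]
    (g : ℝ → F) (a L : ℝ) : ∫ u, g ((u - a) / L) = |L| • ∫ v, g v := by
  rw [integral_sub_right_eq_self (fun u => g (u / L)) a, Measure.integral_comp_div]

theorem deriv_comp_sub_div {w : ℝ → ℝ} (hw : Differentiable ℝ w) (a L u : ℝ) :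
    deriv (fun u => w ((u - a) / L)) u = deriv w ((u - a) / L) / L := by
  have h : HasDerivAt (fun u => w ((u - a) / L)) (deriv w ((u - a) / L) * (1 / L)) u :=
    (hw _).hasDerivAt.comp u (((hasDerivAt_id' u).sub_const a).div_const L)
  rw [h.deriv, mul_one_div]

theorem integral_deriv_sq_comp_sub_div {w : ℝ → ℝ} (hw : Differentiable ℝ w) (a : ℝ) {L : ℝ}
    (hL : 0 < L) : ∫ u, deriv (fun u => w ((u - a) / L)) u ^ 2 = (∫ v, deriv w v ^ 2) / L := by
  simp_rw [deriv_comp_sub_div hw, div_pow]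
  rw [integral_comp_sub_div (fun v => deriv w v ^ 2 / L ^ 2), abs_of_pos hL, smul_eq_mul,
    integral_div]
  field_simp

theorem exists_integral_deriv_sq_lt {δ : ℝ} (hδ : 0 < δ) (a : ℝ) :
    ∃ w : ℝ → ℝ, ContDiff ℝ 1 w ∧ HasCompactSupport w ∧ tsupport w ⊆ Ioi a ∧
      (∫ u, deriv w u ^ 2) < δ * ∫ u, w u ^ 2 := by
  let b : ContDiffBump (2 : ℝ) := ⟨1 / 2, 1, by norm_num, by norm_num⟩
  have hb : ContDiff ℝ 1 b := b.contDiff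
  have hb_supp : tsupport b ⊆ Ioi 0 := by
    rw [b.tsupport_eq, Real.closedBall_eq_Icc]
    exact Icc_subset_Ioi_iff (by norm_num) |>.2 (by norm_num)
  set K := ∫ v, deriv b v ^ 2
  set M := ∫ v, b v ^ 2
  have hM : 0 < M := by
    refine Continuous.integral_pos_of_hasCompactSupport_nonneg_nonzero (x := 2) (by fun_prop)
      (b.hasCompactSupport.comp_left (g := fun x : ℝ => x ^ 2) (by simp))
      (fun v => sq_nonneg _) ?_
    simp [b.one_of_mem_closedBall (Metric.mem_closedBall_self (by norm_num))]
  set L := K / (δ * M) + 1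
  have hL : 1 ≤ L := le_add_of_nonneg_left (by positivity)
  have hL0 : 0 < L := by linarith
  let φ := (affineHomeomorph L a hL0.ne').symm
  refine ⟨fun u => b ((u - a) / L), hb.comp (by fun_prop), b.hasCompactSupport.comp_homeomorph φ,
    ?_, ?_⟩
  · change tsupport (b ∘ φ) ⊆ _
    rw [tsupport_comp_eq_preimage]
    intro u hu
    have hu' : 0 < (u - a) / L := hb_supp hu
    simpa using (div_pos_iff_of_pos_right hL0).1 hu'
  · calc (∫ u, deriv (fun u => b ((u - a) / L)) u ^ 2) = K / L :=
          integral_deriv_sq_comp_sub_div (hb.differentiable one_ne_zero) a hL0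
      _ < δ * (L * M) := by
          have hδM : 0 < δ * M := mul_pos hδ hM
          have hLM : δ * M * L = K + δ * M := by
            simp only [L]
            field_simp
          rw [div_lt_iff₀ hL0]
          nlinarith [mul_le_mul_of_nonneg_left hL (mul_pos hδM hL0).le]
      _ = δ * ∫ u, b ((u - a) / L) ^ 2 := by
          rw [integral_comp_sub_div (fun v => b v ^ 2), abs_of_pos hL0, smul_eq_mul]

theorem stmt18_general (R ε : ℝ) (hR : 0 < R)
    (hε' : ε < 1 - 1 / (2 * Real.sqrt 2)) :
    ∃ ψ : ℝ → ℝ, (∃ K : NNReal, LipschitzWith K ψ) ∧ HasCompactSupport ψ ∧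
      tsupport ψ ⊆ Ioi R ∧
      (∫ r in Ioi R, ((deriv ψ r)^2 - 2 * (1 - ε)^2 * (ψ r)^2 / r^2) * r^2) < 0 := by
  have hc : 1 / 4 < 2 * (1 - ε) ^ 2 := by
    have h8 : (1 / (2 * √2)) ^ 2 = 1 / 8 := by
      rw [div_pow, mul_pow, sq_sqrt zero_le_two]
      norm_num
    have := pow_lt_pow_left₀ (by linarith : 1 / (2 * √2) < 1 - ε) (by positivity) two_ne_zero
    linarith
  obtain ⟨w, hw, hw_supp, hw_pos, hw_neg⟩ := exists_integral_deriv_sq_lt (sub_pos.2 hc) (log R)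
  refine ⟨emdenFowler w, (contDiff_emdenFowler hw hw_supp).lipschitzWith_of_hasCompactSupport
      (hasCompactSupport_emdenFowler hw_supp) one_ne_zero, hasCompactSupport_emdenFowler hw_supp,
      ?_, ?_⟩
  · refine (tsupport_emdenFowler_subset hw_supp).trans ?_
    rintro _ ⟨u, hu, rfl⟩
    simpa [exp_log hR] using exp_lt_exp.2 (hw_pos hu)
  · rw [integral_hardy_form_emdenFowler hw hw_supp _ hR hw_pos]
    linarith

theorem stmt18 (R ε : ℝ) (hR : 0 < R) (hε : 0 < ε)
    (hε' : ε < 1 - 1 / (2 * Real.sqrt 2)) :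
    ∃ ψ : ℝ → ℝ, (∃ K : NNReal, LipschitzWith K ψ) ∧ HasCompactSupport ψ ∧
      tsupport ψ ⊆ Ioi R ∧
      (∫ r in Ioi R, ((deriv ψ r)^2 - 2 * (1 - ε)^2 * (ψ r)^2 / r^2) * r^2) < 0 :=
  stmt18_general R ε hR hε'
end
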